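/- Let (A, R) be a two-player zero-sum normal-form game with A = A₁ × A₂ for finite nonempty action sets A₁, A₂. If a pure strategy profile π is a Nash equilibrium of (A, R) but is not a strict Nash equilibrium, then there exists a mixed strategy profile σ ≠ π that is also a Nash equilibrium of (A, R). -/

import Mathlib

open Finset

/-- A mixed strategy: nonnegative weights summing to one. -/
def IsMixed {α : Type*} [Fintype α] (p : α → ℝ) : Prop :=
  (∀ a, 0 ≤ p a) ∧ ∑ a, p a = 1

/-- The point-mass distribution at `a`. -/
def pmass {α : Type*} [DecidableEq α] (a : α) : α → ℝ :=
  fun x => if x = a then 1 else 0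

/-- Expected reward of a mixed strategy profile `(p, q)` in the game with reward `R`. -/
def expR {A₁ A₂ : Type*} [Fintype A₁] [Fintype A₂]
    (R : A₁ × A₂ → ℝ) (p : A₁ → ℝ) (q : A₂ → ℝ) : ℝ :=
  ∑ a₁, ∑ a₂, p a₁ * q a₂ * R (a₁, a₂)

/-- `(p, q)` is a (mixed) Nash equilibrium of the zero-sum game with reward `R`
(player 1 minimizes `R`, player 2 maximizes `R`). -/
def IsNE {A₁ A₂ : Type*} [Fintype A₁] [Fintype A₂] [DecidableEq A₁] [DecidableEq A₂]
    (R : A₁ × A₂ → ℝ) (p : A₁ → ℝ) (q : A₂ → ℝ) : Prop :=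
  IsMixed p ∧ IsMixed q ∧
  (∀ a₂, expR R p (pmass a₂) ≤ expR R p q) ∧
  (∀ a₁, expR R p q ≤ expR R (pmass a₁) q)

/-- The set of all mixed Nash equilibria of the game with reward `R`. -/
def NESet {A₁ A₂ : Type*} [Fintype A₁] [Fintype A₂] [DecidableEq A₁] [DecidableEq A₂]
    (R : A₁ × A₂ → ℝ) : Set ((A₁ → ℝ) × (A₂ → ℝ)) :=
  {pq | IsNE R pq.1 pq.2}

/-- The pure strategy profile `π` is a strict Nash equilibrium of the game with reward `R`. -/
def IsStrictNE {A₁ A₂ : Type*} (R : A₁ × A₂ → ℝ) (π : A₁ × A₂) : Prop :=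
  (∀ a₂, a₂ ≠ π.2 → R (π.1, a₂) < R π) ∧
  (∀ a₁, a₁ ≠ π.1 → R π < R (a₁, π.2))


section FarkasInfrastructure


variable {κ : Type*} [Fintype κ] [DecidableEq κ] {H : Type*}
  [NormedAddCommGroup H] [InnerProductSpace ℝ H]

theorem carath_aux (g : κ → H) (n : ℕ) : ∀ (μ : κ → ℝ), (∀ k, 0 ≤ μ k) →
    (univ.filter fun k => μ k ≠ 0).card ≤ n →
    ∃ ν : κ → ℝ, (∀ k, 0 ≤ ν k) ∧ ∑ k, ν k • g k = ∑ k, μ k • g k ∧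
      LinearIndependent ℝ (fun k : {k // ν k ≠ 0} => g k) := by
  induction n with
  | zero =>
    intro μ hμ hcard
    have hall : ∀ k, μ k = 0 := by
      intro k
      by_contra hk
      have : k ∈ univ.filter fun k => μ k ≠ 0 := by simp [hk]
      have := card_pos.mpr ⟨k, this⟩
      omega
    refine ⟨μ, hμ, rfl, ?_⟩
    have : IsEmpty {k // μ k ≠ 0} := ⟨fun ⟨k, hk⟩ => hk (hall k)⟩
    exact linearIndependent_empty_type
  | succ n ih =>
    intro μ hμ hcard
    by_cases hli : LinearIndependent ℝ (fun k : {k // μ k ≠ 0} => g k)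
    · exact ⟨μ, hμ, rfl, hli⟩
    · obtain ⟨d, hd0, i, hdi⟩ := Fintype.not_linearIndependent_iff.mp hli
      have key : ∀ d : {k // μ k ≠ 0} → ℝ, (∑ j, d j • g (j : κ) = 0) →
          (∃ j, 0 < d j) →
          ∃ ν : κ → ℝ, (∀ k, 0 ≤ ν k) ∧ ∑ k, ν k • g k = ∑ k, μ k • g k ∧
            LinearIndependent ℝ (fun k : {k // ν k ≠ 0} => g k) := by
        intro d hd0 hex
        obtain ⟨j₀, hj₀⟩ := hex
        set D : κ → ℝ := fun k => if h : μ k ≠ 0 then d ⟨k, h⟩ else 0 with hD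
        have hDmem : ∀ k (h : μ k ≠ 0), D k = d ⟨k, h⟩ := by
          intro k h; simp only [hD, dif_pos h]
        have hDzero : ∀ k, μ k = 0 → D k = 0 := by
          intro k h; simp [hD, h]
        have hDsum : ∑ k, D k • g k = 0 := by
          rw [← Finset.sum_filter_of_ne (p := fun k => μ k ≠ 0)
            (f := fun k => D k • g k) (by
              intro k _ hk
              by_contra h
              exact hk (by simp [hDzero k h]))]
          rw [Finset.sum_subtype (p := fun k => μ k ≠ 0) _ (fun k => by simp)
            (fun k => D k • g k)]
          rw [← hd0]
          exact Fintype.sum_congr _ _ (fun ⟨k, hk⟩ => by rw [hDmem k hk])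
        -- minimize ratio over positive D
        have hj₀D : 0 < D (j₀ : κ) := by
          rw [hDmem _ j₀.2, Subtype.coe_eta]; exact hj₀
        set P : Finset κ := univ.filter fun k => 0 < D k with hP
        have hPne : P.Nonempty := ⟨j₀, by simp [hP, hj₀D]⟩
        obtain ⟨k₀, hk₀P, hk₀min⟩ := P.exists_min_image (fun k => μ k / D k) hPne
        have hk₀D : 0 < D k₀ := by simpa [hP] using hk₀P
        set t : ℝ := μ k₀ / D k₀ with ht
        have ht0 : 0 ≤ t := div_nonneg (hμ k₀) hk₀D.le
        set ν : κ → ℝ := fun k => μ k - t * D k with hν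
        have hν0 : ∀ k, 0 ≤ ν k := by
          intro k
          rcases le_or_gt (D k) 0 with h | h
          · have : t * D k ≤ 0 := mul_nonpos_of_nonneg_of_nonpos ht0 h
            simp only [hν]; linarith [hμ k]
          · have hkP : k ∈ P := by simp [hP, h]
            have h2 := hk₀min k hkP
            rw [div_le_div_iff₀ hk₀D h] at h2
            simp only [hν]
            rw [sub_nonneg, ht, div_mul_eq_mul_div, div_le_iff₀ hk₀D]
            linarith
        have hνk₀ : ν k₀ = 0 := by
          simp only [hν, ht]
          field_simp
          ring
        have hνsub : ∀ k, ν k ≠ 0 → μ k ≠ 0 := by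
          intro k hk
          by_contra h
          have hDk : D k = 0 := hDzero k h
          simp only [hν, hDk, h] at hk
          simp at hk
        have hμk₀ : μ k₀ ≠ 0 := by
          intro h
          rw [hDzero k₀ h] at hk₀D
          exact lt_irrefl _ hk₀D
        have hcard' : (univ.filter fun k => ν k ≠ 0).card ≤ n := by
          have hss : (univ.filter fun k => ν k ≠ 0) ⊆
              (univ.filter fun k => μ k ≠ 0).erase k₀ := by
            intro k hk
            simp only [mem_filter, mem_univ, true_and] at hk
            rw [mem_erase]
            refine ⟨?_, by simp [hνsub k hk]⟩
            rintro rfl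
            exact hk hνk₀
          calc (univ.filter fun k => ν k ≠ 0).card
              ≤ ((univ.filter fun k => μ k ≠ 0).erase k₀).card := card_le_card hss
            _ = (univ.filter fun k => μ k ≠ 0).card - 1 := by
                rw [card_erase_of_mem (by simp [hμk₀])]
            _ ≤ n := by omega
        have hνsum : ∑ k, ν k • g k = ∑ k, μ k • g k := by
          simp only [hν, sub_smul, Finset.sum_sub_distrib]
          have : ∑ x, (t * D x) • g x = t • ∑ x, D x • g x := by
            rw [Finset.smul_sum]
            exact Fintype.sum_congr _ _ (fun k => mul_smul t (D k) (g k))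
          rw [this, hDsum, smul_zero, sub_zero]
        obtain ⟨ν', h1, h2, h3⟩ := ih ν hν0 hcard'
        exact ⟨ν', h1, h2.trans hνsum, h3⟩
      rcases (em (∃ j, 0 < d j)) with hpos | hneg
      · exact key d hd0 hpos
      · refine key (-d) (by simpa using hd0) ⟨i, ?_⟩
        push_neg at hneg
        have h1 := hneg i
        have : d i < 0 := lt_of_le_of_ne h1 hdi
        simpa using this

/-- The finitely generated cone as a set. -/
def coneSet (g : κ → H) : Set H :=
  {x | ∃ μ : κ → ℝ, (∀ k, 0 ≤ μ k) ∧ x = ∑ k, μ k • g k}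

theorem isClosed_coneSet [FiniteDimensional ℝ H] (g : κ → H) :
    IsClosed (coneSet g) := by
  classical
  set C : Finset κ → Set H := fun T =>
    if LinearIndependent ℝ (fun t : T => g t) then
      (fun ν : T → ℝ => ∑ t : T, (ν t) • g t) '' {ν | ∀ t, 0 ≤ ν t}
    else ∅ with hC
  have hclosed : ∀ T, IsClosed (C T) := by
    intro T
    simp only [hC]
    split_ifs with h
    · set φ : (T → ℝ) →ₗ[ℝ] H :=
        { toFun := fun ν => ∑ t : T, (ν t) • g t,
          map_add' := by intro x y; simp [add_smul, Finset.sum_add_distrib],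
          map_smul' := by intro c x; simp [Finset.smul_sum, mul_smul] } with hφ
      have hker : LinearMap.ker φ = ⊥ := by
        rw [LinearMap.ker_eq_bot']
        intro ν hν
        have h2 := Fintype.linearIndependent_iff.mp h ν hν
        funext t
        exact h2 t
      have hemb := LinearMap.isClosedEmbedding_of_injective hker
      have hcl : IsClosed {ν : T → ℝ | ∀ t, 0 ≤ ν t} := by
        have : {ν : T → ℝ | ∀ t, 0 ≤ ν t} = ⋂ t, {ν : T → ℝ | 0 ≤ ν t} := by
          ext ν; simp [Set.mem_iInter]
        rw [this]
        exact isClosed_iInter fun t => isClosed_le continuous_const (continuous_apply t)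
      exact hemb.isClosedMap _ hcl
    · exact isClosed_empty
  have hunion : coneSet g = ⋃ T : Finset κ, C T := by
    ext x
    constructor
    · rintro ⟨μ, hμ, rfl⟩
      obtain ⟨ν, hν0, hνsum, hνli⟩ :=
        carath_aux g (univ.filter fun k => μ k ≠ 0).card μ hμ le_rfl
      set T : Finset κ := univ.filter fun k => ν k ≠ 0 with hT
      have hli : LinearIndependent ℝ (fun t : T => g t) := by
        have hpq : ∀ k, ν k ≠ 0 ↔ k ∈ T := by intro k; simp [hT]
        refine (linearIndependent_equiv (R := ℝ) (Equiv.subtypeEquivRight hpq)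
          (f := fun t : T => g (t : κ))).mp ?_
        have : (fun t : T => g (t : κ)) ∘ (Equiv.subtypeEquivRight hpq) =
            fun k : {k // ν k ≠ 0} => g (k : κ) := by
          funext k; simp [Equiv.subtypeEquivRight]; rfl
        rw [this]
        exact hνli
      refine Set.mem_iUnion.mpr ⟨T, ?_⟩
      simp only [hC, if_pos hli]
      refine ⟨fun t => ν t, fun t => hν0 t, ?_⟩
      have hz : ∀ k ∈ univ, k ∉ T → ν k • g k = 0 := by
        intro k _ hk
        have : ν k = 0 := by simpa [hT] using hk
        simp [this]
      calc ∑ t : T, (ν t) • g t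
          = ∑ k ∈ T, ν k • g k :=
            (Finset.sum_subtype T (fun k => Iff.rfl) (fun k => ν k • g k)).symm
        _ = ∑ k, ν k • g k := Finset.sum_subset (subset_univ T) hz
        _ = ∑ k, μ k • g k := hνsum
    · intro hx
      obtain ⟨T, hxT⟩ := Set.mem_iUnion.mp hx
      by_cases h : LinearIndependent ℝ (fun t : T => g t)
      · simp only [hC, if_pos h] at hxT
        obtain ⟨ν, hν0, rfl⟩ := hxT
        set μ : κ → ℝ := fun k => if hk : k ∈ T then ν ⟨k, hk⟩ else 0 with hμd
        refine ⟨μ, ?_, ?_⟩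
        · intro k
          by_cases hk : k ∈ T
          · simp [hμd, hk, hν0 ⟨k, hk⟩]
          · simp [hμd, hk]
        · have hz : ∀ k ∈ univ, k ∉ T → μ k • g k = 0 := by
            intro k _ hk
            simp [hμd, hk]
          calc ∑ t : T, (ν t) • g t
              = ∑ t : T, μ (t : κ) • g t :=
                Fintype.sum_congr _ _ (fun t => by simp [hμd, t.2])
            _ = ∑ k ∈ T, μ k • g k :=
                (Finset.sum_subtype T (fun k => Iff.rfl) (fun k => μ k • g k)).symm
            _ = ∑ k, μ k • g k := Finset.sum_subset (subset_univ T) hz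
      · simp only [hC, if_neg h] at hxT
        exact absurd hxT (Set.notMem_empty x)
  rw [hunion]
  exact isClosed_iUnion_of_finite hclosed

open scoped RealInnerProductSpace in
theorem farkas_sep [FiniteDimensional ℝ H] [CompleteSpace H] (g : κ → H) (b : H)
    (hb : b ∉ coneSet g) :
    ∃ y : H, (∀ k, 0 ≤ ⟪g k, y⟫) ∧ ⟪b, y⟫ < 0 := by
  classical
  set K : ConvexCone ℝ H :=
    { carrier := coneSet g
      smul_mem' := by
        rintro c hc x ⟨μ, hμ, rfl⟩
        refine ⟨fun k => c * μ k, fun k => mul_nonneg hc.le (hμ k), ?_⟩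
        rw [Finset.smul_sum]
        exact Fintype.sum_congr _ _ (fun k => by rw [mul_smul])
      add_mem' := by
        rintro x ⟨μ, hμ, rfl⟩ y ⟨ν, hν, rfl⟩
        refine ⟨fun k => μ k + ν k, fun k => add_nonneg (hμ k) (hν k), ?_⟩
        rw [← Finset.sum_add_distrib]
        exact Fintype.sum_congr _ _ (fun k => by rw [add_smul]) } with hK
  have hne : (K : Set H).Nonempty := by
    refine ⟨0, ⟨fun _ => 0, fun _ => le_rfl, by simp⟩⟩
  have hcl : IsClosed (K : Set H) := isClosed_coneSet g
  have hbK : b ∉ K := hb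
  obtain ⟨y, hy1', hy2'⟩ := ProperCone.hyperplane_separation' (E := H)
    ({ carrier := (K : Set H)
       add_mem' := fun ha hb => K.add_mem ha hb
       zero_mem' := ⟨fun _ => 0, fun _ => le_rfl, by simp⟩
       smul_mem' := by
         rintro c x ⟨μ, hμ, rfl⟩
         refine ⟨fun k => (c : ℝ) * μ k, fun k => mul_nonneg c.2 (hμ k), ?_⟩
         show (c : ℝ) • ∑ k, μ k • g k = _
         rw [Finset.smul_sum]
         exact Fintype.sum_congr _ _ (fun k => by rw [mul_smul])
       isClosed' := hcl } : ProperCone ℝ H) (x₀ := b) hbK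
  have hy1 : ∀ x ∈ (K : Set H), 0 ≤ ⟪x, y⟫ := fun x hx => hy1' x hx
  have hy2 : ⟪y, b⟫ < 0 := by rw [real_inner_comm]; exact hy2'
  refine ⟨y, fun k => ?_, by rwa [real_inner_comm] at hy2⟩
  refine hy1 _ ⟨fun j => if j = k then 1 else 0, fun j => by positivity, ?_⟩
  simp [ite_smul]

end FarkasInfrastructure

section Dichotomy

open scoped RealInnerProductSpace

private theorem coordEq {ι κ : Type*} [Fintype ι] [Fintype κ] (h : κ → ι → ℝ) (μ : κ → ℝ)
    (j : ι) (x : EuclideanSpace ℝ ι)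
    (heq : x = ∑ k, μ k • (WithLp.equiv 2 (ι → ℝ)).symm (h k)) :
    x j = ∑ k, μ k * h k j := by
  have := congrArg (EuclideanSpace.projₗ (𝕜 := ℝ) j) heq
  rw [map_sum] at this
  simpa [PiLp.toLp_apply, WithLp.equiv_symm_apply] using this

private theorem inner_eq {ι : Type*} [Fintype ι] (f : ι → ℝ) (y : EuclideanSpace ℝ ι) :
    ⟪(WithLp.equiv 2 (ι → ℝ)).symm f, y⟫ = ∑ i, f i * y i := by
  simp [PiLp.inner_apply, RCLike.inner_apply, WithLp.equiv_symm_apply]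
  exact Finset.sum_congr rfl fun _ _ => mul_comm _ _

/-- The key strict-complementarity dichotomy, proved via Farkas' lemma. -/
theorem dichotomy {A₁ A₂ : Type*} [Fintype A₁] [Fintype A₂] [DecidableEq A₁] [DecidableEq A₂]
    (M : A₁ → A₂ → ℝ) (c : A₂) :
    (∃ q : A₂ → ℝ, (∀ x, 0 ≤ q x) ∧ ∑ x, q x = 1 ∧ 0 < q c ∧
      ∀ b, 0 ≤ ∑ x, q x * M b x) ∨
    (∃ p : A₁ → ℝ, (∀ b, 0 ≤ p b) ∧ ∑ b, p b = 1 ∧ (∀ x, ∑ b, p b * M b x ≤ 0) ∧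
      ∑ b, p b * M b c < 0) := by
  classical
  set eq2 := (WithLp.equiv 2 (Option A₁ → ℝ)).symm with heq2
  set gfun : (A₂ ⊕ Option A₁) → Option A₁ → ℝ := fun k j =>
    Sum.rec (fun x => Option.rec (if x = c then (1:ℝ) else 0) (fun b => M b x) j)
      (fun j' => if j = j' then (-1:ℝ) else 0) k with hgfun
  set g : (A₂ ⊕ Option A₁) → EuclideanSpace ℝ (Option A₁) := fun k => eq2 (gfun k) with hg
  set B : EuclideanSpace ℝ (Option A₁) :=
    eq2 (fun j => Option.rec (1:ℝ) (fun _ => 0) j) with hB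
  by_cases hmem : B ∈ coneSet g
  · left
    obtain ⟨μ, hμ0, hBeq⟩ := hmem
    have hcoord : ∀ j : Option A₁, (Option.rec (1:ℝ) (fun _ => 0) j : ℝ)
        = ∑ k, μ k * gfun k j := by
      intro j
      have := coordEq gfun μ j B hBeq
      rwa [hB] at this
    -- row coordinates
    have hrow : ∀ b : A₁, 0 ≤ ∑ x : A₂, μ (Sum.inl x) * M b x := by
      intro b
      have h0 := hcoord (some b)
      rw [Fintype.sum_sum_type] at h0
      simp only [hgfun] at h0
      have h1 : ∑ j' : Option A₁, μ (Sum.inr j') * (if (some b : Option A₁) = j' then (-1:ℝ) else 0)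
          = -μ (Sum.inr (some b)) := by
        simp [mul_ite, Finset.sum_ite_eq]
      rw [h1] at h0
      have := hμ0 (Sum.inr (some b))
      linarith
    -- the `none` coordinate
    have hnone : 1 ≤ μ (Sum.inl c) := by
      have h0 := hcoord none
      rw [Fintype.sum_sum_type] at h0
      simp only [hgfun] at h0
      have h1 : ∑ j' : Option A₁, μ (Sum.inr j') * (if (none : Option A₁) = j' then (-1:ℝ) else 0)
          = -μ (Sum.inr none) := by
        simp [mul_ite, Finset.sum_ite_eq]
      have h2 : ∑ x : A₂, μ (Sum.inl x) * (if x = c then (1:ℝ) else 0) = μ (Sum.inl c) := by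
        simp [mul_ite, Finset.sum_ite_eq']
      rw [h1, h2] at h0
      have := hμ0 (Sum.inr none)
      linarith
    set S : ℝ := ∑ x : A₂, μ (Sum.inl x) with hS
    have hSpos : 0 < S := by
      have : μ (Sum.inl c) ≤ S :=
        Finset.single_le_sum (fun x _ => hμ0 (Sum.inl x)) (mem_univ c)
      linarith
    refine ⟨fun x => μ (Sum.inl x) / S, fun x => div_nonneg (hμ0 _) hSpos.le, ?_, ?_, ?_⟩
    · rw [← Finset.sum_div]
      field_simp
      exact hS.symm
    · exact div_pos (by linarith) hSpos
    · intro b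
      have : ∑ x : A₂, μ (Sum.inl x) / S * M b x
          = (∑ x : A₂, μ (Sum.inl x) * M b x) / S := by
        rw [Finset.sum_div]
        exact Fintype.sum_congr _ _ (fun x => by ring)
      rw [this]
      exact div_nonneg (hrow b) hSpos.le
  · right
    obtain ⟨y, hy1, hy2⟩ := farkas_sep g B hmem
    have hyneg : ∀ j : Option A₁, y j ≤ 0 := by
      intro j
      have := hy1 (Sum.inr j)
      rw [hg] at this
      simp only at this
      rw [inner_eq] at this
      simp only [hgfun] at this
      have h1 : ∑ i : Option A₁, (if i = j then (-1:ℝ) else 0) * y i = -y j := by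
        simp [ite_mul, Finset.sum_ite_eq']
      rw [h1] at this
      linarith
    have hynone : y none < 0 := by
      rw [hB, inner_eq] at hy2
      have h1 : ∑ i : Option A₁, (Option.rec (1:ℝ) (fun _ => 0) i : ℝ) * y i = y none := by
        rw [Fintype.sum_option]
        simp
      rwa [h1] at hy2
    have hcolineq : ∀ x : A₂,
        0 ≤ (if x = c then (1:ℝ) else 0) * y none + ∑ b : A₁, M b x * y (some b) := by
      intro x
      have := hy1 (Sum.inl x)
      rw [hg] at this
      simp only at this
      rw [inner_eq] at this
      rw [Fintype.sum_option] at this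
      simpa [hgfun] using this
    set p0 : A₁ → ℝ := fun b => -y (some b) with hp0
    have hp00 : ∀ b, 0 ≤ p0 b := fun b => by simp [hp0]; exact hyneg (some b)
    have hguar : ∀ x : A₂, ∑ b : A₁, p0 b * M b x ≤
        (if x = c then (1:ℝ) else 0) * y none := by
      intro x
      have h := hcolineq x
      have h2 : ∑ b : A₁, p0 b * M b x = -∑ b : A₁, M b x * y (some b) := by
        rw [← Finset.sum_neg_distrib]
        exact Fintype.sum_congr _ _ (fun b => by simp [hp0]; ring)
      rw [h2]
      linarith
    set S : ℝ := ∑ b : A₁, p0 b with hS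
    have hS0 : 0 ≤ S := Finset.sum_nonneg (fun b _ => hp00 b)
    have hSpos : 0 < S := by
      rcases eq_or_lt_of_le hS0 with h | h
      · exfalso
        have hall : ∀ b ∈ univ, p0 b = 0 :=
          (Finset.sum_eq_zero_iff_of_nonneg (fun b _ => hp00 b)).mp h.symm
        have := hguar c
        rw [if_pos rfl, one_mul] at this
        have hz : ∑ b : A₁, p0 b * M b c = 0 :=
          Finset.sum_eq_zero (fun b _ => by rw [hall b (mem_univ b), zero_mul])
        rw [hz] at this
        linarith
      · exact h
    refine ⟨fun b => p0 b / S, fun b => div_nonneg (hp00 b) hSpos.le, ?_, ?_, ?_⟩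
    · rw [← Finset.sum_div]
      field_simp
      exact hS.symm
    · intro x
      have hrw : ∑ b : A₁, p0 b / S * M b x = (∑ b : A₁, p0 b * M b x) / S := by
        rw [Finset.sum_div]
        exact Fintype.sum_congr _ _ (fun b => by ring)
      rw [hrw]
      refine div_nonpos_of_nonpos_of_nonneg ?_ hSpos.le
      have := hguar x
      by_cases hx : x = c
      · rw [if_pos hx, one_mul] at this
        linarith
      · rw [if_neg hx, zero_mul] at this
        linarith
    · have hrw : ∑ b : A₁, p0 b / S * M b c = (∑ b : A₁, p0 b * M b c) / S := by
        rw [Finset.sum_div]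
        exact Fintype.sum_congr _ _ (fun b => by ring)
      rw [hrw]
      refine div_neg_of_neg_of_pos ?_ hSpos
      have := hguar c
      rw [if_pos rfl, one_mul] at this
      linarith

end Dichotomy

section Helpers

variable {A₁ A₂ : Type*} [Fintype A₁] [Fintype A₂] [DecidableEq A₁] [DecidableEq A₂]

theorem pmass_isMixed {α : Type*} [Fintype α] [DecidableEq α] (a : α) : IsMixed (pmass a) := by
  constructor
  · intro x
    unfold pmass
    positivity
  · simp [pmass]

theorem expR_pmass_right (R : A₁ × A₂ → ℝ) (p : A₁ → ℝ) (c : A₂) :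
    expR R p (pmass c) = ∑ b, p b * R (b, c) := by
  unfold expR pmass
  refine Fintype.sum_congr _ _ (fun b => ?_)
  simp [mul_ite, ite_mul, Finset.sum_ite_eq']

theorem expR_pmass_left (R : A₁ × A₂ → ℝ) (b : A₁) (q : A₂ → ℝ) :
    expR R (pmass b) q = ∑ x, q x * R (b, x) := by
  unfold expR pmass
  rw [Finset.sum_comm]
  refine Fintype.sum_congr _ _ (fun x => ?_)
  simp [mul_ite, ite_mul, Finset.sum_ite_eq', mul_comm]

theorem expR_pmass_pmass (R : A₁ × A₂ → ℝ) (b : A₁) (c : A₂) :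
    expR R (pmass b) (pmass c) = R (b, c) := by
  rw [expR_pmass_right]
  simp [pmass, ite_mul, Finset.sum_ite_eq']

theorem sum_mul_le_of_le {α : Type*} [Fintype α] (q : α → ℝ) (f : α → ℝ) (v : ℝ)
    (hq0 : ∀ x, 0 ≤ q x) (hq1 : ∑ x, q x = 1) (hf : ∀ x, f x ≤ v) :
    ∑ x, q x * f x ≤ v := by
  calc ∑ x, q x * f x ≤ ∑ x, q x * v :=
        Finset.sum_le_sum (fun x _ => mul_le_mul_of_nonneg_left (hf x) (hq0 x))
    _ = v := by rw [← Finset.sum_mul, hq1, one_mul]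

theorem le_sum_mul_of_le {α : Type*} [Fintype α] (q : α → ℝ) (f : α → ℝ) (v : ℝ)
    (hq0 : ∀ x, 0 ≤ q x) (hq1 : ∑ x, q x = 1) (hf : ∀ x, v ≤ f x) :
    v ≤ ∑ x, q x * f x := by
  calc v = ∑ x, q x * v := by rw [← Finset.sum_mul, hq1, one_mul]
    _ ≤ ∑ x, q x * f x :=
        Finset.sum_le_sum (fun x _ => mul_le_mul_of_nonneg_left (hf x) (hq0 x))

theorem sum_mul_sub {α : Type*} [Fintype α] (q : α → ℝ) (f : α → ℝ) (v : ℝ)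
    (hq1 : ∑ x, q x = 1) :
    ∑ x, q x * (f x - v) = (∑ x, q x * f x) - v := by
  simp only [mul_sub, Finset.sum_sub_distrib, ← Finset.sum_mul, hq1, one_mul]

theorem sum_mul_sub' {α : Type*} [Fintype α] (q : α → ℝ) (f : α → ℝ) (v : ℝ)
    (hq1 : ∑ x, q x = 1) :
    ∑ x, q x * (v - f x) = v - ∑ x, q x * f x := by
  simp only [mul_sub, Finset.sum_sub_distrib, ← Finset.sum_mul, hq1, one_mul]

theorem sum_pmass_mul {α : Type*} [Fintype α] [DecidableEq α] (a : α) (f : α → ℝ) :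
    ∑ b, pmass a b * f b = f a := by
  simp [pmass, ite_mul, Finset.sum_ite_eq']

end Helpers

/-- If a pure strategy profile `π` is a Nash equilibrium but not a strict Nash
equilibrium of a finite two-player zero-sum game, then there is another mixed
Nash equilibrium `σ ≠ π`. -/
theorem nonstrict_not_unique {A₁ A₂ : Type*} [Fintype A₁] [Fintype A₂]
    [DecidableEq A₁] [DecidableEq A₂] [Nonempty A₁] [Nonempty A₂]
    (R : A₁ × A₂ → ℝ) (π : A₁ × A₂)
    (hNE : IsNE R (pmass π.1) (pmass π.2)) (hnotstrict : ¬ IsStrictNE R π) :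
    ∃ σ : (A₁ → ℝ) × (A₂ → ℝ),
      σ ≠ (pmass π.1, pmass π.2) ∧ IsNE R σ.1 σ.2 := by
  classical
  obtain ⟨hm1, hm2, hcolNE, hrowNE⟩ := hNE
  set v : ℝ := R π with hv
  have hπ : R (π.1, π.2) = v := by rw [hv, Prod.mk.eta]
  have hcol' : ∀ x, R (π.1, x) ≤ v := by
    intro x
    have := hcolNE x
    rwa [expR_pmass_pmass, expR_pmass_pmass, hπ] at this
  have hrow' : ∀ b, v ≤ R (b, π.2) := by
    intro b
    have := hrowNE b
    rwa [expR_pmass_pmass, expR_pmass_pmass, hπ] at this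
  have mkNE : ∀ (p : A₁ → ℝ) (q : A₂ → ℝ), (∀ b, 0 ≤ p b) → ∑ b, p b = 1 →
      (∀ x, 0 ≤ q x) → ∑ x, q x = 1 →
      (∀ x, ∑ b, p b * R (b, x) ≤ v) → (∀ b, v ≤ ∑ x, q x * R (b, x)) →
      IsNE R p q := by
    intro p q hp0 hp1 hq0 hq1 hpopt hqopt
    have v1 : expR R p q = ∑ b, p b * (∑ x, q x * R (b, x)) := by
      unfold expR
      refine Fintype.sum_congr _ _ (fun b => ?_)
      rw [Finset.mul_sum]
      exact Fintype.sum_congr _ _ (fun x => by ring)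
    have v2 : expR R p q = ∑ x, q x * (∑ b, p b * R (b, x)) := by
      unfold expR
      rw [Finset.sum_comm]
      refine Fintype.sum_congr _ _ (fun x => ?_)
      rw [Finset.mul_sum]
      exact Fintype.sum_congr _ _ (fun b => by ring)
    have hpay : expR R p q = v := by
      refine le_antisymm ?_ ?_
      · rw [v2]
        exact sum_mul_le_of_le q _ v hq0 hq1 hpopt
      · rw [v1]
        exact le_sum_mul_of_le p _ v hp0 hp1 hqopt
    refine ⟨⟨hp0, hp1⟩, ⟨hq0, hq1⟩, ?_, ?_⟩
    · intro x
      rw [expR_pmass_right, hpay]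
      exact hpopt x
    · intro b
      rw [expR_pmass_left, hpay]
      exact hqopt b
  unfold IsStrictNE at hnotstrict
  rw [not_and_or] at hnotstrict
  rcases hnotstrict with hns | hns
  · -- a non-strict column deviation
    push_neg at hns
    obtain ⟨x₀, hx₀ne, hx₀ge⟩ := hns
    have hx₀ : R (π.1, x₀) = v := le_antisymm (hcol' x₀) (hv ▸ hx₀ge)
    rcases dichotomy (fun b x => R (b, x) - v) x₀ with
      ⟨q, hq0, hq1, hqc, hqg⟩ | ⟨p, hp0, hp1, hpg, hpc⟩
    · refine ⟨(pmass π.1, q), ?_, ?_⟩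
      · intro h
        have h2 : q = pmass π.2 := congrArg Prod.snd h
        rw [h2] at hqc
        simp [pmass, hx₀ne] at hqc
      · refine mkNE _ _ (pmass_isMixed π.1).1 (pmass_isMixed π.1).2 hq0 hq1 ?_ ?_
        · intro x
          rw [sum_pmass_mul]
          exact hcol' x
        · intro b
          have := hqg b
          rw [sum_mul_sub q _ v hq1] at this
          linarith
    · refine ⟨(p, pmass π.2), ?_, ?_⟩
      · intro h
        have h2 : p = pmass π.1 := congrArg Prod.fst h
        rw [sum_mul_sub p _ v hp1] at hpc
        rw [h2, sum_pmass_mul, hx₀] at hpc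
        linarith
      · refine mkNE _ _ hp0 hp1 (pmass_isMixed π.2).1 (pmass_isMixed π.2).2 ?_ ?_
        · intro x
          have := hpg x
          rw [sum_mul_sub p _ v hp1] at this
          linarith
        · intro b
          rw [sum_pmass_mul]
          exact hrow' b
  · -- a non-strict row deviation
    push_neg at hns
    obtain ⟨b₀, hb₀ne, hb₀le⟩ := hns
    have hb₀ : R (b₀, π.2) = v := le_antisymm (hv ▸ hb₀le) (hrow' b₀)
    rcases dichotomy (fun (x : A₂) (b : A₁) => v - R (b, x)) b₀ with
      ⟨q, hq0, hq1, hqc, hqg⟩ | ⟨p, hp0, hp1, hpg, hpc⟩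
    · refine ⟨(q, pmass π.2), ?_, ?_⟩
      · intro h
        have h2 : q = pmass π.1 := congrArg Prod.fst h
        rw [h2] at hqc
        simp [pmass, hb₀ne] at hqc
      · refine mkNE _ _ hq0 hq1 (pmass_isMixed π.2).1 (pmass_isMixed π.2).2 ?_ ?_
        · intro x
          have := hqg x
          rw [sum_mul_sub' q _ v hq1] at this
          linarith
        · intro b
          rw [sum_pmass_mul]
          exact hrow' b
    · refine ⟨(pmass π.1, p), ?_, ?_⟩
      · intro h
        have h2 : p = pmass π.2 := congrArg Prod.snd h
        rw [sum_mul_sub' p _ v hp1] at hpc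
        rw [h2, sum_pmass_mul, hb₀] at hpc
        linarith
      · refine mkNE _ _ (pmass_isMixed π.1).1 (pmass_isMixed π.1).2 hp0 hp1 ?_ ?_
        · intro x
          rw [sum_pmass_mul]
          exact hcol' x
        · intro b
          have := hpg b
          rw [sum_mul_sub' p _ v hp1] at this
          linarith
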